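/- Let G be a finite group acting linearly on a finite-dimensional real inner product space V by orthogonal transformations, with the action irreducible. Then for all x, v in V, (1/|G|)·∑_{g∈G} ⟨x, g•v⟩² = ‖v‖²·‖x‖²/dim V. -/

import Mathlib

/-!
The frame operator `T w = ∑ g, ⟪ρ g v, w⟫ ρ g v` of the orbit of `v` is symmetric and, because
`ρ` is orthogonal, commutes with every `ρ h`. A symmetric operator has a real eigenvalue, whose
eigenspace is then `ρ`-invariant, so irreducibility forces `T = μ • 1`. Taking traces gives
`μ · dim V = ∑ g, ‖ρ g v‖² = |G| ‖v‖²`, while `⟪x, T x⟫ = ∑ g, ⟪x, ρ g v⟫²` equals `μ ‖x‖²`.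
-/

open InnerProductSpace Module
open scoped RealInnerProductSpace

section FrameOperator

variable {𝕜 E ι : Type*} [RCLike 𝕜] [NormedAddCommGroup E] [InnerProductSpace 𝕜 E] [Fintype ι]

variable (𝕜) in
noncomputable def frameOperator (u : ι → E) : E →ₗ[𝕜] E :=
  ∑ i, (rankOne 𝕜 (u i) (u i) : E →ₗ[𝕜] E)

theorem frameOperator_apply (u : ι → E) (w : E) :
    frameOperator 𝕜 u w = ∑ i, inner 𝕜 (u i) w • u i := by
  simp [frameOperator]

theorem isSymmetric_frameOperator (u : ι → E) : (frameOperator 𝕜 u).IsSymmetric :=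
  LinearMap.isSymmetric_sum _ fun i _ => isSymmetric_rankOne_self (u i)

theorem trace_frameOperator [FiniteDimensional 𝕜 E] (u : ι → E) :
    LinearMap.trace 𝕜 E (frameOperator 𝕜 u) = ∑ i, inner 𝕜 (u i) (u i) := by
  simp [frameOperator, map_sum, trace_rankOne]

theorem frameOperator_comp_equiv {κ : Type*} [Fintype κ] (u : ι → E) (e : κ ≃ ι) :
    frameOperator 𝕜 (u ∘ e) = frameOperator 𝕜 u :=
  e.sum_comp fun i => (rankOne 𝕜 (u i) (u i) : E →ₗ[𝕜] E)

theorem frameOperator_comp_of_inner_map_map (u : ι → E) {L : E →ₗ[𝕜] E}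
    (hL : ∀ x y, inner 𝕜 (L x) (L y) = inner 𝕜 x y) :
    frameOperator 𝕜 (L ∘ u) * L = L * frameOperator 𝕜 u := by
  ext w
  simp [frameOperator_apply, hL]

end FrameOperator

theorem real_inner_frameOperator_self {E ι : Type*} [NormedAddCommGroup E] [InnerProductSpace ℝ E]
    [Fintype ι] (u : ι → E) (x : E) :
    ⟪x, frameOperator ℝ u x⟫_ℝ = ∑ i, ⟪x, u i⟫_ℝ ^ 2 := by
  simp [frameOperator_apply, inner_sum, real_inner_smul_right, real_inner_comm, sq]

theorem LinearMap.IsSymmetric.exists_eq_smul_one_of_commute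
    {𝕜 E G : Type*} [RCLike 𝕜] [NormedAddCommGroup E] [InnerProductSpace 𝕜 E]
    [FiniteDimensional 𝕜 E] [Monoid G] (ρ : Representation 𝕜 G E)
    (hirr : ∀ W : Submodule 𝕜 E, (∀ (g : G), ∀ w ∈ W, ρ g w ∈ W) → W = ⊥ ∨ W = ⊤)
    {T : E →ₗ[𝕜] E} (hT : T.IsSymmetric) (hcomm : ∀ g, Commute T (ρ g)) :
    ∃ μ : 𝕜, T = μ • 1 := by
  rcases subsingleton_or_nontrivial E with hE | hE
  · exact ⟨0, Subsingleton.elim _ _⟩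
  obtain ⟨μ, hμ⟩ : ∃ μ : 𝕜, End.HasEigenvalue T μ :=
    ⟨_, hT.hasEigenvalue_iSup_of_finiteDimensional⟩
  refine ⟨μ, LinearMap.ext fun w => ?_⟩
  have htop : End.eigenspace T μ = ⊤ :=
    (hirr _ fun g => End.mapsTo_genEigenspace_of_comm (hcomm g) μ 1).resolve_left hμ
  simpa using End.mem_eigenspace_iff.mp (htop ▸ Submodule.mem_top : w ∈ End.eigenspace T μ)

theorem commute_frameOperator_orbit {𝕜 E G : Type*} [RCLike 𝕜] [NormedAddCommGroup E]
    [InnerProductSpace 𝕜 E] [Group G] [Fintype G] (ρ : Representation 𝕜 G E)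
    (horth : ∀ (g : G) (x y : E), inner 𝕜 (ρ g x) (ρ g y) = inner 𝕜 x y) (v : E) (h : G) :
    Commute (frameOperator 𝕜 fun g => ρ g v) (ρ h) := by
  have hshift : (ρ h ∘ fun g => ρ g v) = (fun g => ρ g v) ∘ Equiv.mulLeft h := by
    ext g
    simp
  calc frameOperator 𝕜 (fun g => ρ g v) * ρ h
      = frameOperator 𝕜 (ρ h ∘ fun g => ρ g v) * ρ h := by
        rw [hshift, frameOperator_comp_equiv]
    _ = ρ h * frameOperator 𝕜 (fun g => ρ g v) := frameOperator_comp_of_inner_map_map _ (horth h)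

/-- Finite-group version of the orthogonality relation for matrix elements
of a real irreducible orthogonal representation. -/
theorem stmt_1
    {G : Type*} [Group G] [Fintype G]
    {V : Type*} [NormedAddCommGroup V] [InnerProductSpace ℝ V]
    [FiniteDimensional ℝ V]
    (ρ : Representation ℝ G V)
    (horth : ∀ (g : G) (x y : V), (inner ℝ (ρ g x) (ρ g y) : ℝ) = inner ℝ x y)
    (hirr : ∀ W : Submodule ℝ V, (∀ (g : G), ∀ w ∈ W, ρ g w ∈ W) → W = ⊥ ∨ W = ⊤)
    (x v : V) :
    (Fintype.card G : ℝ)⁻¹ * ∑ g : G, (inner ℝ x (ρ g v) : ℝ) ^ 2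
      = ‖v‖ ^ 2 * ‖x‖ ^ 2 / (Module.finrank ℝ V) := by
  obtain ⟨μ, hμ⟩ := (isSymmetric_frameOperator fun g => ρ g v).exists_eq_smul_one_of_commute
    ρ hirr (commute_frameOperator_orbit ρ horth v)
  have htrace : μ * finrank ℝ V = Fintype.card G * ‖v‖ ^ 2 := by
    have hnorm (g : G) : ‖ρ g v‖ ^ 2 = ‖v‖ ^ 2 := by
      rw [← real_inner_self_eq_norm_sq, ← real_inner_self_eq_norm_sq, horth]
    simpa [hμ, hnorm] using trace_frameOperator (𝕜 := ℝ) fun g => ρ g v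
  have hsum : ∑ g, ⟪x, ρ g v⟫_ℝ ^ 2 = μ * ‖x‖ ^ 2 := by
    rw [← real_inner_frameOperator_self, hμ]
    simp [real_inner_smul_right]
  rcases (finrank ℝ V).eq_zero_or_pos with hV | hV
  · have : Subsingleton V := finrank_zero_iff.mp hV
    simp [Subsingleton.elim x 0]
  rw [hsum]
  field_simp
  linear_combination ‖x‖ ^ 2 * htrace
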